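/- Let C be an extension-closed pseudovariety of finite groups and let A, B be residually-C groups with B infinite. Then the restricted wreath product A ≀ B is residually-C if and only if A is abelian. -/

import Mathlib

/-! If `A` is not abelian, a commutator `⁅a₁, a₂⁆ ≠ 1` placed at the coordinate `1` of the
base group survives in no finite quotient of `A ≀ B`: as `B` is infinite, some `b ≠ 1` dies in
the quotient, and conjugating by `b` moves a second copy of `A` to the coordinate `b`, where it
commutes with the first copy.

If `A` is abelian, an element `f` of the base with `f s ≠ 1` is detected by combining a quotient
`ψ : A → A₁` with `ψ (f s) ≠ 1` and a quotient `φ : B → Q` injective on the finite support of `f`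
(one separating the finitely many `u * v⁻¹`, `u ≠ v` in the support, from `1`). Multiplying the
values of `ψ ∘ f` along the fibres of `φ` is a homomorphism of base groups because `A₁` is
abelian; it is equivariant, so it extends to `A ≀ B → A₁ ≀ Q`, and `A₁ ≀ Q` lies in `C` by
closure under products and extensions. -/

open Function SemidirectProduct

def restrictedBase (A B : Type*) [Group A] [Group B] : Subgroup (B → A) where
  carrier := {f | (mulSupport f).Finite}
  one_mem' := by simp
  mul_mem' := fun {f g} hf hg => (hf.union hg).subset (mulSupport_mul f g)
  inv_mem' := fun {f} hf => by simpa using hf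

lemma shift_finite (A B : Type*) [Group A] [Group B] (b : B) {f : B → A}
    (hf : (mulSupport f).Finite) : (mulSupport fun x => f (b⁻¹ * x)).Finite := by
  apply (hf.image (fun x => b * x)).subset
  intro x hx
  exact ⟨b⁻¹ * x, hx, by simp⟩

def wreathAut (A B : Type*) [Group A] [Group B] (b : B) : MulAut (restrictedBase A B) where
  toFun f := ⟨fun x => (f : B → A) (b⁻¹ * x), shift_finite A B b f.2⟩
  invFun f := ⟨fun x => (f : B → A) (b * x), by
    have h := shift_finite A B b⁻¹ f.2; simp only [inv_inv] at h; exact h⟩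
  left_inv f := Subtype.ext (funext fun x => by simp)
  right_inv f := Subtype.ext (funext fun x => by simp)
  map_mul' f g := rfl

def wreathHom (A B : Type*) [Group A] [Group B] : B →* MulAut (restrictedBase A B) where
  toFun := wreathAut A B
  map_one' := by
    ext f x
    simp [wreathAut]
  map_mul' b c := by
    ext f x
    simp [wreathAut, mul_assoc]

abbrev Wreath (A B : Type*) [Group A] [Group B] :=
  restrictedBase A B ⋊[wreathHom A B] B

structure Pseudovariety (C : (G : Type) → [_inst : Group G] → Prop) : Prop where
  finite : ∀ (G : Type) [Group G], C G → Finite G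
  iso_closed : ∀ (G H : Type) [Group G] [Group H], (G ≃* H) → C G → C H
  subgroup_closed : ∀ (G : Type) [Group G], C G → ∀ H : Subgroup G, C H
  prod_closed : ∀ (G H : Type) [Group G] [Group H], C G → C H → C (G × H)
  quot_closed : ∀ (G : Type) [Group G] (N : Subgroup G) [N.Normal], C G → C (G ⧸ N)
  ext_closed : ∀ (G : Type) [Group G] (N : Subgroup G) [N.Normal], C N → C (G ⧸ N) → C G

def ResiduallyC (C : (G : Type) → [_inst : Group G] → Prop) (G : Type*) [Group G] : Prop :=
  ∀ g : G, g ≠ 1 → ∃ (Q : Type) (_ : Group Q) (φ : G →* Q),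
    C Q ∧ Function.Surjective φ ∧ φ g ≠ 1

def CSeparable (C : (G : Type) → [_inst : Group G] → Prop) {G : Type*} [Group G]
    (X : Set G) : Prop :=
  ∀ g : G, g ∉ X → ∃ (Q : Type) (_ : Group Q) (φ : G →* Q),
    C Q ∧ Function.Surjective φ ∧ ∀ x ∈ X, φ g ≠ φ x

def COpen (C : (G : Type) → [_inst : Group G] → Prop) {G : Type} [Group G]
    (H : Subgroup G) : Prop :=
  ∃ N : Subgroup G, ∃ _ : N.Normal, N ≤ H ∧ C (G ⧸ N)

noncomputable def depthC (C : (G : Type) → [_inst : Group G] → Prop)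
    (G : Type) [Group G] (X : Set G) (h : G) : ℕ :=
  sInf {n : ℕ | ∃ N : Subgroup G, ∃ _ : N.Normal, C (G ⧸ N) ∧
    (∀ x ∈ X, (QuotientGroup.mk h : G ⧸ N) ≠ QuotientGroup.mk x) ∧ N.index = n}

def CConjSep (C : (G : Type) → [_inst : Group G] → Prop) (G : Type*) [Group G] : Prop :=
  ∀ g : G, CSeparable C {x : G | ∃ w : G, w * g * w⁻¹ = x}

namespace Pseudovariety

variable {C : (G : Type) → [_inst : Group G] → Prop}

lemma of_subsingleton (hC : Pseudovariety C) {Q : Type} [Group Q] (hQ : C Q)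
    (T : Type) [Group T] [Subsingleton T] : C T := by
  have : Unique T := uniqueOfSubsingleton 1
  exact hC.iso_closed _ _ (MulEquiv.ofUnique (M := (⊥ : Subgroup Q)))
    (hC.subgroup_closed Q hQ ⊥)

lemma pi (hC : Pseudovariety C) {Q : Type} [Group Q] (hQ : C Q) (I : Type) [Finite I] :
    C (I → Q) := by
  have hfin : ∀ n, C (Fin n → Q) := by
    intro n
    induction n with
    | zero => exact hC.of_subsingleton hQ _
    | succ n ih =>
      refine hC.iso_closed _ _ ?_ (hC.prod_closed _ _ hQ ih)
      refine { toEquiv := Fin.consEquiv fun _ => Q, map_mul' := fun _ _ => ?_ }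
      funext i
      cases i using Fin.cases <;> simp [Fin.consEquiv]
  obtain ⟨n, ⟨e⟩⟩ := Finite.exists_equiv_fin I
  exact hC.iso_closed _ _ (MulEquiv.arrowCongr e.symm (MulEquiv.refl Q)) (hfin n)

lemma wreath (hC : Pseudovariety C) {A Q : Type} [Group A] [Group Q] (hA : C A) (hQ : C Q) :
    C (Wreath A Q) := by
  have : Finite Q := hC.finite Q hQ
  have hbase : C (restrictedBase A Q) := hC.subgroup_closed _ (hC.pi hA Q) _
  refine hC.ext_closed _ (rightHom : Wreath A Q →* Q).ker ?_ ?_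
  · exact hC.iso_closed _ _ ((MonoidHom.ofInjective inl_injective).trans
      (MulEquiv.subgroupCongr range_inl_eq_ker_rightHom)) hbase
  · exact hC.iso_closed _ _
      (QuotientGroup.quotientKerEquivOfSurjective _ rightHom_surjective).symm hQ

end Pseudovariety

namespace restrictedBase

variable {A B : Type*} [Group A] [Group B]

lemma coe_wreathHom_apply (b : B) (f : restrictedBase A B) (x : B) :
    ((wreathHom A B b f : restrictedBase A B) : B → A) x = (f : B → A) (b⁻¹ * x) := rfl

variable (A B) in
noncomputable def single : A →* restrictedBase A B :=
  open scoped Classical in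
  (MonoidHom.mulSingle (fun _ : B => A) 1).codRestrict _ fun _ =>
    (Set.finite_singleton 1).subset Pi.mulSupport_mulSingle_subset

open scoped Classical in
lemma coe_single (a : A) : (single A B a : B → A) = Pi.mulSingle 1 a := rfl

lemma single_injective : Injective (single A B) := by
  classical
  intro a a' h
  simpa [coe_single] using congrFun (congrArg Subtype.val h) 1

lemma commute_single_wreathHom_single {b : B} (hb : b ≠ 1) (c d : A) :
    Commute (single A B c) (wreathHom A B b (single A B d)) := by
  classical
  refine Subtype.ext (funext fun x => ?_)
  change (single A B c : B → A) x * (single A B d : B → A) (b⁻¹ * x)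
    = (single A B d : B → A) (b⁻¹ * x) * (single A B c : B → A) x
  rcases eq_or_ne x 1 with rfl | hx
  · simp [coe_single, hb]
  · simp [coe_single, hx]

section map

variable {A₁ Q : Type*} [CommGroup A₁] [Group Q]

lemma finite_mulSupport_comp (ψ : A →* A₁) (f : restrictedBase A B) :
    (mulSupport (ψ ∘ (f : B → A))).Finite :=
  f.2.subset (mulSupport_comp_subset (map_one ψ) _)

noncomputable def map (φ : B →* Q) (ψ : A →* A₁) :
    restrictedBase A B →* restrictedBase A₁ Q where
  toFun f := ⟨fun q => ∏ᶠ x ∈ φ ⁻¹' {q}, ψ ((f : B → A) x), by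
    refine (f.2.image φ).subset fun q hq => ?_
    obtain ⟨x, rfl, hx⟩ := exists_ne_one_of_finprod_mem_ne_one hq
    exact ⟨x, fun h => hx (by rw [h, map_one]), rfl⟩⟩
  map_one' := Subtype.ext (funext fun q => finprod_mem_of_eqOn_one fun x _ => map_one ψ)
  map_mul' f g := Subtype.ext (funext fun q => by
    simp only [Subgroup.coe_mul, Pi.mul_apply, map_mul]
    exact finprod_mem_mul_distrib' ((finite_mulSupport_comp ψ f).inter_of_right _)
      ((finite_mulSupport_comp ψ g).inter_of_right _))

variable (φ : B →* Q) (ψ : A →* A₁)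

lemma coe_map_apply (f : restrictedBase A B) (q : Q) :
    (map φ ψ f : Q → A₁) q = ∏ᶠ x ∈ φ ⁻¹' {q}, ψ ((f : B → A) x) := rfl

lemma map_wreathHom (b : B) (f : restrictedBase A B) :
    map φ ψ (wreathHom A B b f) = wreathHom A₁ Q (φ b) (map φ ψ f) := by
  refine Subtype.ext (funext fun q => ?_)
  refine finprod_mem_eq_of_bijOn (Equiv.mulLeft b⁻¹) ((Equiv.mulLeft b⁻¹).bijOn fun x => ?_)
    fun x _ => rfl
  simp

lemma coe_map_apply_of_injOn {f : restrictedBase A B}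
    (hφ : Set.InjOn φ (mulSupport (f : B → A))) {s : B} (hs : s ∈ mulSupport (f : B → A)) :
    (map φ ψ f : Q → A₁) (φ s) = ψ ((f : B → A) s) := by
  rw [coe_map_apply, finprod_mem_inter_mulSupport_eq' _ _ {s}, finprod_mem_singleton]
  intro x hx
  exact ⟨fun h => hφ (mulSupport_comp_subset (map_one ψ) _ hx) hs h, fun h => h ▸ rfl⟩

end map

end restrictedBase

namespace Wreath

open restrictedBase

variable {A B : Type*} [Group A] [Group B]

lemma commute_map_inl_single [Infinite B] {Q : Type*} [Group Q] [Finite Q]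
    (φ : Wreath A B →* Q) (c d : A) :
    Commute (φ (inl (single A B c))) (φ (inl (single A B d))) := by
  obtain ⟨b, hb, hφb⟩ : ∃ b : B, b ≠ 1 ∧ φ (inr b) = 1 := by
    obtain ⟨x, y, hxy, hφxy⟩ := Finite.exists_ne_map_eq_of_infinite fun b : B => φ (inr b)
    refine ⟨x * y⁻¹, fun h => hxy (mul_inv_eq_one.mp h), ?_⟩
    rw [map_mul, map_inv, map_mul, map_inv, hφxy, mul_inv_cancel]
  have h := (commute_single_wreathHom_single hb c d).map (φ.comp inl)
  simpa only [MonoidHom.comp_apply, inl_aut, map_mul, map_inv, hφb, inv_one, one_mul,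
    mul_one] using h

section map

variable {A₁ Q : Type*} [CommGroup A₁] [Group Q]

noncomputable def map (φ : B →* Q) (ψ : A →* A₁) : Wreath A B →* Wreath A₁ Q :=
  SemidirectProduct.map (restrictedBase.map φ ψ) φ fun b =>
    MonoidHom.ext (restrictedBase.map_wreathHom φ ψ b)

lemma map_left (φ : B →* Q) (ψ : A →* A₁) (g : Wreath A B) :
    (map φ ψ g).left = restrictedBase.map φ ψ g.left := rfl

end map

end Wreath

namespace ResiduallyC

variable {C : (G : Type) → [_inst : Group G] → Prop} {G A B : Type*} [Group G] [Group A] [Group B]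

lemma of_exists_hom (hC : Pseudovariety C)
    (h : ∀ g : G, g ≠ 1 → ∃ (Q : Type) (_ : Group Q) (φ : G →* Q), C Q ∧ φ g ≠ 1) :
    ResiduallyC C G := by
  intro g hg
  obtain ⟨Q, _, φ, hQ, hφg⟩ := h g hg
  exact ⟨φ.range, inferInstance, φ.rangeRestrict, hC.subgroup_closed Q hQ _,
    φ.rangeRestrict_surjective, fun h1 => hφg (congrArg Subtype.val h1)⟩

lemma exists_hom_forall_ne_one (hC : Pseudovariety C)
    (hG : ResiduallyC C G)
    {Q₀ : Type} [Group Q₀] (hQ₀ : C Q₀) {T : Set G} (hT : T.Finite) (h1 : (1 : G) ∉ T) :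
    ∃ (Q : Type) (_ : Group Q) (φ : G →* Q), C Q ∧ ∀ g ∈ T, φ g ≠ 1 := by
  induction T, hT using Set.Finite.induction_on with
  | empty => exact ⟨Q₀, inferInstance, 1, hQ₀, by simp⟩
  | @insert g T _ _ ih =>
    obtain ⟨Q₁, _, φ₁, hQ₁, -, hφ₁⟩ := hG g fun hg => h1 (hg ▸ Set.mem_insert g T)
    obtain ⟨Q₂, _, φ₂, hQ₂, hφ₂⟩ := ih fun hT => h1 (Set.mem_insert_of_mem g hT)
    refine ⟨Q₁ × Q₂, inferInstance, φ₁.prod φ₂, hC.prod_closed _ _ hQ₁ hQ₂, ?_⟩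
    rintro x (rfl | hx) hx1
    · exact hφ₁ (congrArg Prod.fst hx1)
    · exact hφ₂ x hx (congrArg Prod.snd hx1)

lemma exists_hom_injOn (hC : Pseudovariety C) (hG : ResiduallyC C G)
    {Q₀ : Type} [Group Q₀] (hQ₀ : C Q₀) {S : Set G} (hS : S.Finite) :
    ∃ (Q : Type) (_ : Group Q) (φ : G →* Q), C Q ∧ Set.InjOn φ S := by
  have h1 : (1 : G) ∉ (fun p : G × G => p.1 * p.2⁻¹) '' S.offDiag := by
    rintro ⟨⟨u, v⟩, ⟨-, -, huv⟩, h⟩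
    exact huv (mul_inv_eq_one.mp h)
  obtain ⟨Q, _, φ, hQ, hφ⟩ :=
    exists_hom_forall_ne_one hC hG hQ₀ (hS.offDiag.image _) h1
  refine ⟨Q, inferInstance, φ, hQ, fun u hu v hv huv => ?_⟩
  by_contra hne
  exact hφ _ ⟨(u, v), ⟨hu, hv, hne⟩, rfl⟩ (by rw [map_mul, map_inv, huv, mul_inv_cancel])

open restrictedBase commutatorElement in
lemma commute_of_wreath (hC : Pseudovariety C) [Infinite B] (h : ResiduallyC C (Wreath A B))
    (a₁ a₂ : A) : Commute a₁ a₂ := by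
  rw [← commutatorElement_eq_one_iff_commute]
  by_contra hne
  have hg : inl (single A B (⁅a₁, a₂⁆ : A)) ≠ (1 : Wreath A B) := by
    rwa [Ne, ← map_one inl, inl_injective.eq_iff, ← map_one (single A B),
      single_injective.eq_iff]
  obtain ⟨Q, _, φ, hQ, -, hφ⟩ := h _ hg
  have : Finite Q := hC.finite Q hQ
  apply hφ
  rw [map_commutatorElement, map_commutatorElement, map_commutatorElement,
    commutatorElement_eq_one_iff_commute]
  exact Wreath.commute_map_inl_single φ a₁ a₂

lemma wreath (hC : Pseudovariety C) (hA : ResiduallyC C A) (hB : ResiduallyC C B)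
    (hcomm : ∀ a₁ a₂ : A, Commute a₁ a₂) : ResiduallyC C (Wreath A B) := by
  refine of_exists_hom hC fun g hg => ?_
  by_cases hgr : g.right = 1
  · obtain ⟨s, hs⟩ : ∃ s, (g.left : B → A) s ≠ 1 := by
      by_contra! h
      exact hg (SemidirectProduct.ext (Subtype.ext (funext h)) hgr)
    obtain ⟨A₁, _, ψ, hA₁, hψ, hψs⟩ := hA _ hs
    let : CommGroup A₁ :=
      { mul_comm := fun x y => by
          obtain ⟨a, rfl⟩ := hψ x
          obtain ⟨a', rfl⟩ := hψ y
          exact ((hcomm a a').map ψ).eq }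
    obtain ⟨Q, _, φ, hQ, hφ⟩ := exists_hom_injOn hC hB hA₁ g.left.2
    refine ⟨Wreath A₁ Q, inferInstance, Wreath.map φ ψ, hC.wreath hA₁ hQ, fun h => hψs ?_⟩
    rw [← restrictedBase.coe_map_apply_of_injOn φ ψ hφ hs, ← Wreath.map_left, h]
    rfl
  · obtain ⟨Q, _, φ, hQ, -, hφ⟩ := hB _ hgr
    exact ⟨Q, inferInstance, φ.comp rightHom, hQ, hφ⟩

end ResiduallyC

/-- If `A`, `B` are residually-`C` and `B` is infinite, then `A ≀ B` is
residually-`C` iff `A` is abelian. -/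
theorem stmt7 (C : (G : Type) → [_inst : Group G] → Prop) (hC : Pseudovariety C)
    (A B : Type*) [Group A] [Group B] [Infinite B]
    (hA : ResiduallyC C A) (hB : ResiduallyC C B) :
    ResiduallyC C (Wreath A B) ↔ ∀ a₁ a₂ : A, a₁ * a₂ = a₂ * a₁ :=
  ⟨fun h => h.commute_of_wreath hC, fun hcomm => hA.wreath hC hB hcomm⟩
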